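/- arXiv:1803.00834 — 4 statements merged into one kernel-verified Lean document; each statement's English description precedes it below -/
import Mathlib

section
/- Let H be a finite-dimensional real inner product space, A a symmetric invertible linear operator on H, and P an orthogonal projection with (Id−P)A(Id−P) = 0 and |(PAPv, v)| ≤ h₀‖Pv‖² for all v, where h₀ ≥ 0. Suppose all eigenvalues λ of A satisfy |λ| ≥ λ₀ > 0. If ρ is an eigenvalue of PAP-compatible operator πPπ where π is the orthogonal projection onto a sum of eigenspaces of A with negative eigenvalues, and v is a unit eigenvector (πPπ v = ρ v, πv = v), then ρ ≥ λ₀/(2λ₀ + h₀). -/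
open RealInnerProductSpace

/-- Eigenvalue lower bound for `πPπ`: in a finite-dimensional real inner product
space, if `A` is symmetric invertible with `(Id−P)A(Id−P) = 0` and
`|(PAPv,v)| ≤ h₀‖Pv‖²`, `π` commutes with `A` and projects onto a sum of
eigenspaces of `A` with eigenvalues `≤ −λ₀ < 0`, then any eigenvalue `ρ` of
`πPπ` with unit eigenvector `v` satisfying `πv = v` obeys
`ρ ≥ λ₀/(2λ₀ + h₀)`. -/
theorem stmt3 {H : Type*} [NormedAddCommGroup H] [InnerProductSpace ℝ H]
    [FiniteDimensional ℝ H]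
    (A P π : H →ₗ[ℝ] H) (h₀ lam0 : ℝ) (hh₀ : 0 ≤ h₀) (hlam0 : 0 < lam0)
    (hAsym : ∀ x y, ⟪A x, y⟫ = ⟪x, A y⟫) (hAbij : Function.Bijective A)
    (hPsym : ∀ x y, ⟪P x, y⟫ = ⟪x, P y⟫) (hPidem : ∀ x, P (P x) = P x)
    (hπsym : ∀ x y, ⟪π x, y⟫ = ⟪x, π y⟫) (hπidem : ∀ x, π (π x) = π x)
    (hπA : ∀ x, π (A x) = A (π x))
    (hzero : ∀ x, A (x - P x) - P (A (x - P x)) = 0)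
    (hbound : ∀ v, |⟪P (A (P v)), v⟫| ≤ h₀ * ‖P v‖ ^ 2)
    (hneg : ∀ w, π w = w → ⟪A w, w⟫ ≤ -lam0 * ‖w‖ ^ 2)
    (ρ : ℝ) (v : H) (hv : ‖v‖ = 1) (hπv : π v = v)
    (heig : π (P (π v)) = ρ • v) :
    lam0 / (2 * lam0 + h₀) ≤ ρ := by
  rw [hπv] at heig
  set a := ⟪A v, v⟫ with ha
  have hvv : ⟪v, v⟫ = 1 := by
    rw [real_inner_self_eq_norm_sq, hv]; norm_num
  have hρ1 : ⟪P v, v⟫ = ρ := by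
    calc ⟪P v, v⟫ = ⟪P v, π v⟫ := by rw [hπv]
    _ = ⟪π (P v), v⟫ := (hπsym _ _).symm
    _ = ρ := by rw [heig, real_inner_smul_left, hvv]; ring
  have hρ2 : ‖P v‖ ^ 2 = ρ := by
    rw [← real_inner_self_eq_norm_sq]
    calc ⟪P v, P v⟫ = ⟪v, P (P v)⟫ := hPsym _ _
    _ = ⟪v, P v⟫ := by rw [hPidem]
    _ = ρ := by rw [real_inner_comm, hρ1]
  have hρnn : 0 ≤ ρ := hρ2 ▸ sq_nonneg _
  have hAPv : ⟪A (P v), v⟫ = ρ * a := by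
    calc ⟪A (P v), v⟫ = ⟪P v, A v⟫ := hAsym _ _
    _ = ⟪P v, A (π v)⟫ := by rw [hπv]
    _ = ⟪P v, π (A v)⟫ := by rw [hπA]
    _ = ⟪π (P v), A v⟫ := (hπsym _ _).symm
    _ = ρ * a := by rw [heig, real_inner_smul_left, ha, real_inner_comm]
  have hw : A (v - P v) = P (A (v - P v)) := sub_eq_zero.mp (hzero v)
  have hAwv : ⟪A (v - P v), v⟫ = ρ * a - ⟪A (P v), P v⟫ := by
    calc ⟪A (v - P v), v⟫ = ⟪P (A (v - P v)), v⟫ := by rw [← hw]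
    _ = ⟪A (v - P v), P v⟫ := hPsym _ _
    _ = ⟪v - P v, A (P v)⟫ := hAsym _ _
    _ = ⟪v, A (P v)⟫ - ⟪P v, A (P v)⟫ := inner_sub_left _ _ _
    _ = ρ * a - ⟪A (P v), P v⟫ := by
        rw [real_inner_comm (A (P v)) v, hAPv, real_inner_comm (A (P v)) (P v)]
  have hsplit : a = ρ * a + ⟪A (v - P v), v⟫ := by
    rw [ha, ← hAPv, ← inner_add_left, ← map_add, add_sub_cancel]
  have hX : ⟪P (A (P v)), v⟫ = (2 * ρ - 1) * a := by
    have h1 : ⟪P (A (P v)), v⟫ = ⟪A (P v), P v⟫ := hPsym _ _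
    rw [hAwv] at hsplit
    rw [h1]; linarith
  have habs : |(2 * ρ - 1) * a| ≤ h₀ * ρ := by
    rw [← hX]; have := hbound v; rwa [hρ2] at this
  have haneg : a ≤ -lam0 := by
    have := hneg v hπv; rwa [hv, one_pow, mul_one] at this
  have hkey : (1 - 2 * ρ) * lam0 ≤ h₀ * ρ := by
    rcases le_or_gt (1 - 2 * ρ) 0 with h | h
    · nlinarith
    · have h2 : (2 * ρ - 1) * a ≤ h₀ * ρ := (abs_le.mp habs).2
      nlinarith
  rw [div_le_iff₀ (by linarith)]
  nlinarith
end

section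
/- Let H be a finite-dimensional real inner product space, A a symmetric invertible operator on it, P an orthogonal projection with (Id−P)A(Id−P) = 0, and B₊, B₋ symmetric operators whose ranges lie in the positive/negative spectral subspaces of A, satisfying PB₊P = P and PB₋P = P on Range(P). Then for any φ in Range(P): (PAB₊φ, φ) = ½[(AB₊φ, B₊φ) + (Aφ, φ)] and (PAB₋φ, φ) = ½[(AB₋φ, B₋φ) + (Aφ, φ)]. -/
open RealInnerProductSpace

/-- The identity used to compute `j'(0)` in Proposition 4 b): in a
finite-dimensional real inner product space, if `A` is symmetric invertible,
`P` an orthogonal projection with `(Id−P)A(Id−P) = 0`, and `B₊`, `B₋` symmetric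
operators with ranges in the positive/negative spectral subspaces of `A`
satisfying `PB₊P = P` and `PB₋P = P` on `Range(P)`, then for `φ ∈ Range(P)`,
`(PAB₊φ, φ) = ½[(AB₊φ, B₊φ) + (Aφ, φ)]` and similarly for `B₋`. -/
theorem stmt14 {H : Type*} [NormedAddCommGroup H] [InnerProductSpace ℝ H]
    [FiniteDimensional ℝ H]
    (A P Bp Bm : H →ₗ[ℝ] H) (Vp Vm : Submodule ℝ H)
    (lam1 lamm1 : ℝ) (hlam1 : 0 < lam1) (hlamm1 : lamm1 < 0)
    (hAsym : ∀ x y, ⟪A x, y⟫ = ⟪x, A y⟫) (hAbij : Function.Bijective A)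
    (hPsym : ∀ x y, ⟪P x, y⟫ = ⟪x, P y⟫) (hPidem : ∀ x, P (P x) = P x)
    (hzero : ∀ x, A (x - P x) - P (A (x - P x)) = 0)
    (hBpsym : ∀ x y, ⟪Bp x, y⟫ = ⟪x, Bp y⟫) (hBmsym : ∀ x y, ⟪Bm x, y⟫ = ⟪x, Bm y⟫)
    (hBprange : ∀ x, Bp x ∈ Vp) (hBmrange : ∀ x, Bm x ∈ Vm)
    (hVpA : ∀ v ∈ Vp, A v ∈ Vp) (hVmA : ∀ v ∈ Vm, A v ∈ Vm)
    (hVppos : ∀ v ∈ Vp, lam1 * ‖v‖ ^ 2 ≤ ⟪A v, v⟫)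
    (hVmneg : ∀ v ∈ Vm, ⟪A v, v⟫ ≤ lamm1 * ‖v‖ ^ 2)
    (hPBp : ∀ φ, P φ = φ → P (Bp φ) = φ) (hPBm : ∀ φ, P φ = φ → P (Bm φ) = φ) :
    ∀ φ : H, P φ = φ →
      ⟪P (A (Bp φ)), φ⟫ = (⟪A (Bp φ), Bp φ⟫ + ⟪A φ, φ⟫) / 2 ∧
      ⟪P (A (Bm φ)), φ⟫ = (⟪A (Bm φ), Bm φ⟫ + ⟪A φ, φ⟫) / 2 := by
  intro φ hφ
  have key : ∀ b : H, P b = φ → ⟪P (A b), φ⟫ = (⟪A b, b⟫ + ⟪A φ, φ⟫) / 2 := by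
    intro b hb
    have hψ : P (b - φ) = 0 := by simp [map_sub, hb, hφ]
    have h1 : A (b - φ) = P (A (b - φ)) := by
      have h := hzero (b - φ)
      rw [hψ, sub_zero] at h
      exact sub_eq_zero.mp h
    have h2 : ⟪A (b - φ), b - φ⟫ = 0 := by
      rw [h1, hPsym, hψ, inner_zero_right]
    have expand : ⟪A b, b⟫ - ⟪A b, φ⟫ - ⟪A φ, b⟫ + ⟪A φ, φ⟫ = 0 := by
      have h := h2
      simp only [map_sub, inner_sub_left, inner_sub_right] at h
      linarith
    have hsym : ⟪A φ, b⟫ = ⟪A b, φ⟫ := by rw [hAsym, real_inner_comm]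
    have hP : ⟪P (A b), φ⟫ = ⟪A b, φ⟫ := by rw [hPsym, hφ]
    rw [hP]
    linarith
  exact ⟨key (Bp φ) (hPBp φ hφ), key (Bm φ) (hPBm φ hφ)⟩
end

section
/- Let H = L²(Ω) × (H¹(Ω)/ℝ) with the ℋ inner product ((u,s),(u',s')) = ∫cuu' + σ∇s·∇s', let A be the Graetz operator in the balanced case (∫_Ω h = 0, Neumann boundary conditions) and φ₀ = (1, Δ_σ^{-1}h). Then φ₀ ∈ D(A), Aφ₀ = 0, and ‖φ₀‖²_ℋ = ∫_Ω c + ∫_Ω σ|∇Δ_σ^{-1}h|² = ∫_Ω (c − h·Δ_σ^{-1}h) > 0. -/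
open MeasureTheory RealInnerProductSpace

/-- Divergence of a vector field on `ℝ²`. -/
noncomputable def div2 (F : EuclideanSpace ℝ (Fin 2) → EuclideanSpace ℝ (Fin 2))
    (x : EuclideanSpace ℝ (Fin 2)) : ℝ :=
  ∑ i : Fin 2, fderiv ℝ F x (EuclideanSpace.single i 1) i

/-!
Since `div(σ∇s) = h`, the two terms of the first component of `A(1, s)` cancel. Testing the weak
Neumann problem with `s` itself gives the energy identity `∫ σ|∇s|² = -∫ h s`, which turns
`‖(1, s)‖²_ℋ` into `∫ (c - h s)`; this is positive because `∫_Ω c ≥ c₀ |Ω| > 0` and the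
Dirichlet energy is nonnegative.
-/

theorem integral_mul_norm_gradient_sq_eq_neg_integral_mul
    {E : Type*} [NormedAddCommGroup E] [InnerProductSpace ℝ E] [CompleteSpace E]
    [MeasurableSpace E] {μ : Measure E} {σ h s : E → ℝ}
    (hweak : ∫ x, σ x * ⟪gradient s x, gradient s x⟫ ∂μ = -∫ x, h x * s x ∂μ) :
    ∫ x, σ x * ‖gradient s x‖ ^ 2 ∂μ = -∫ x, h x * s x ∂μ := by
  simpa only [real_inner_self_eq_norm_sq] using hweak

theorem setIntegral_pos_of_pos_le {X : Type*} [MeasurableSpace X] {μ : Measure X}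
    {s : Set X} {f : X → ℝ} {a : ℝ} (hs : MeasurableSet s) (hμs : 0 < μ s) (hμs' : μ s < ⊤)
    (ha : 0 < a) (hf : ∀ x ∈ s, a ≤ f x) (hfi : IntegrableOn f s μ) :
    0 < ∫ x in s, f x ∂μ :=
  calc 0 < a * μ.real s := mul_pos ha (ENNReal.toReal_pos hμs.ne' hμs'.ne)
    _ = ∫ _ in s, a ∂μ := by rw [setIntegral_const, smul_eq_mul, mul_comm]
    _ ≤ ∫ x in s, f x ∂μ := setIntegral_mono_on (integrableOn_const hμs'.ne) hfi hs hf

theorem stmt17_general (Ω : Set (EuclideanSpace ℝ (Fin 2))) (hΩ : MeasurableSet Ω)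
    (hΩpos : 0 < volume Ω) (hΩfin : volume Ω < ⊤)
    (c σ h s : EuclideanSpace ℝ (Fin 2) → ℝ)
    (c₀ : ℝ) (hc₀ : 0 < c₀) (hc : ∀ x ∈ Ω, c₀ ≤ c x)
    (hσ : ∀ x ∈ Ω, 0 ≤ σ x)
    (hsdiff : Differentiable ℝ s)
    (hspde : ∀ x ∈ Ω, div2 (fun y => σ y • gradient s y) x = h x)
    (hweak : ∀ φ : EuclideanSpace ℝ (Fin 2) → ℝ, Differentiable ℝ φ →
      (∫ x in Ω, σ x * ⟪gradient s x, gradient φ x⟫) = -(∫ x in Ω, h x * φ x))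
    (hintc : IntegrableOn c Ω)
    (hinths : IntegrableOn (fun x => h x * s x) Ω) :
    -- `Aφ₀ = 0` : first component of `A(1,s)` vanishes on `Ω`
    (∀ x ∈ Ω, h x * (c x)⁻¹ * 1 - (c x)⁻¹ * div2 (fun y => σ y • gradient s y) x = 0) ∧
    -- `‖φ₀‖²_ℋ = ∫ c·1² + ∫ σ|∇s|² = ∫ (c − h·s) > 0`
    (∫ x in Ω, c x * 1 * 1) + (∫ x in Ω, σ x * ‖gradient s x‖ ^ 2)
      = (∫ x in Ω, (c x - h x * s x)) ∧
    0 < ∫ x in Ω, (c x - h x * s x) := by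
  have energy := integral_mul_norm_gradient_sq_eq_neg_integral_mul (hweak s hsdiff)
  have norm_sq : (∫ x in Ω, c x * 1 * 1) + (∫ x in Ω, σ x * ‖gradient s x‖ ^ 2)
      = ∫ x in Ω, (c x - h x * s x) := by
    rw [integral_sub hintc hinths, energy]
    simp only [mul_one, sub_eq_add_neg]
  refine ⟨fun x hx => by rw [hspde x hx]; ring, norm_sq, ?_⟩
  rw [← norm_sq]
  refine add_pos_of_pos_of_nonneg ?_ ?_
  · simpa only [mul_one] using setIntegral_pos_of_pos_le hΩ hΩpos hΩfin hc₀ hc hintc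
  · exact setIntegral_nonneg hΩ fun x hx => mul_nonneg (hσ x hx) (sq_nonneg _)

/-- The kernel of the Graetz operator in the balanced case: with
`s = Δ_σ^{-1}h` (zero-mean Neumann solution of `div(σ∇s) = h`, expressed both
pointwise and in weak form), `φ₀ = (1, s)` satisfies `Aφ₀ = 0` (i.e. the first
component `hc⁻¹·1 − c⁻¹ div(σ∇s)` vanishes on `Ω`), and
`‖φ₀‖²_ℋ = ∫_Ω c + ∫_Ω σ|∇s|² = ∫_Ω (c − h·s) > 0`. -/
theorem stmt17 (Ω : Set (EuclideanSpace ℝ (Fin 2))) (hΩ : MeasurableSet Ω)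
    (hΩpos : 0 < volume Ω) (hΩfin : volume Ω < ⊤)
    (c σ h s : EuclideanSpace ℝ (Fin 2) → ℝ)
    (c₀ : ℝ) (hc₀ : 0 < c₀) (hc : ∀ x ∈ Ω, c₀ ≤ c x)
    (hσ : ∀ x ∈ Ω, 0 ≤ σ x) (hcne : ∀ x ∈ Ω, c x ≠ 0)
    (hhmean : (∫ x in Ω, h x) = 0)
    (hsdiff : Differentiable ℝ s) (hsmean : (∫ x in Ω, s x) = 0)
    (hspde : ∀ x ∈ Ω, div2 (fun y => σ y • gradient s y) x = h x)
    (hweak : ∀ φ : EuclideanSpace ℝ (Fin 2) → ℝ, Differentiable ℝ φ →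
      (∫ x in Ω, σ x * ⟪gradient s x, gradient φ x⟫) = -(∫ x in Ω, h x * φ x))
    (hintc : IntegrableOn c Ω)
    (hinths : IntegrableOn (fun x => h x * s x) Ω)
    (hintσ : IntegrableOn (fun x => σ x * ‖gradient s x‖ ^ 2) Ω) :
    -- `Aφ₀ = 0` : first component of `A(1,s)` vanishes on `Ω`
    (∀ x ∈ Ω, h x * (c x)⁻¹ * 1 - (c x)⁻¹ * div2 (fun y => σ y • gradient s y) x = 0) ∧
    -- `‖φ₀‖²_ℋ = ∫ c·1² + ∫ σ|∇s|² = ∫ (c − h·s) > 0`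
    (∫ x in Ω, c x * 1 * 1) + (∫ x in Ω, σ x * ‖gradient s x‖ ^ 2)
      = (∫ x in Ω, (c x - h x * s x)) ∧
    0 < ∫ x in Ω, (c x - h x * s x) :=
  stmt17_general Ω hΩ hΩpos hΩfin c σ h s c₀ hc₀ hc hσ hsdiff hspde hweak hintc hinths
end

section
/- Let H be a real Hilbert space, A self-adjoint with compact resolvent and trivial kernel, P an orthogonal projection, π₊, π₋ the positive/negative spectral projections of A, and suppose: (i) B₋ is bounded with Range(B₋) ⊆ Range(π₋) and P B₋ P ψ-property: for all φ, π₋(PB₋Pφ − Pφ) = 0; (ii) on Range(π₊) the quadratic form (A⁻¹·, ·) is positive definite; (iii) (A⁻¹θ, θ) = 0 whenever Pθ = θ (the 'constants controlled' condition). Then for every φ ∈ H, ψ = B₋Pφ is the unique element satisfying Pψ = Pφ and π₊ψ = 0. -/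
open RealInnerProductSpace

/-- Abstract version of Theorem 2, constants-controlled case: under the listed
spectral hypotheses on `A⁻¹`, `π₊`, `π₋`, `P` and the defining properties of
`B₋`, for every `φ`, `ψ = B₋Pφ` is the unique element satisfying `Pψ = Pφ` and
`π₊ψ = 0`. -/
theorem stmt18 {H : Type*} [NormedAddCommGroup H] [InnerProductSpace ℝ H] [CompleteSpace H]
    (Ainv P πp πm Bm : H →L[ℝ] H)
    (hAinvsa : IsSelfAdjoint Ainv) (hAinvinj : Function.Injective Ainv)
    (hPsa : IsSelfAdjoint P) (hPidem : ∀ x, P (P x) = P x)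
    (hπpm : ∀ x, πp (πm x) = 0)
    (hdec : ∀ θ, πm θ = 0 → πp θ = θ)        -- trivial-kernel decomposition
    (hdec' : ∀ ψ, πp ψ = 0 → πm ψ = ψ)
    (hBrange : ∀ x, πm (Bm x) = Bm x)        -- (i) Range(B₋) ⊆ Range(π₋)
    (hBprop : ∀ φ, πm (P (Bm (P φ)) - P φ) = 0)
    (hBinv : ∀ χ, πm χ = χ → Bm (P χ) = χ)
    (hpos : ∀ θ, πp θ = θ → θ ≠ 0 → 0 < ⟪Ainv θ, θ⟫)   -- (ii)
    (hconst : ∀ θ, P θ = θ → ⟪Ainv θ, θ⟫ = 0)           -- (iii)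
    (φ : H) :
    (P (Bm (P φ)) = P φ ∧ πp (Bm (P φ)) = 0) ∧
    ∀ ψ, P ψ = P φ → πp ψ = 0 → ψ = Bm (P φ) := by
  have hθ : P (Bm (P φ)) - P φ = 0 := by
    set θ := P (Bm (P φ)) - P φ with hθdef
    have hPθ : P θ = θ := by simp [hθdef, map_sub, hPidem]
    have hπpθ : πp θ = θ := hdec θ (hBprop φ)
    by_contra hne
    exact absurd (hconst θ hPθ) (ne_of_gt (hpos θ hπpθ hne))
  have hP : P (Bm (P φ)) = P φ := by
    have := sub_eq_zero.mp hθ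
    exact this
  refine ⟨⟨hP, ?_⟩, ?_⟩
  · rw [← hBrange (P φ)]; exact hπpm _
  · intro ψ hPψ hπpψ
    have := hBinv ψ (hdec' ψ hπpψ)
    rw [hPψ] at this
    exact this.symm
end
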